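/- arXiv:math/0602281 — 4 statements merged into one kernel-verified Lean document; each statement's English description precedes it below -/
import Mathlib

section
/- Let F be a field of characteristic 0, A a unital associative F-algebra, and h, e ∈ A with h·e − e·h = e. Then for all a, b ∈ F the identity v_a · u_b = (1−et)^{−(a+b)} holds in the power series ring A[[t]]; equivalently, for every natural number r, ∑_{m+n=r} ((−1)^m/(m!·n!)) · h_a^[n] · e^n · h_{−b}^[m] · e^m = binom(a+b+r−1, r) · e^r. (Lemma 2.2, second identity.) -/
/-- The shifted rising factorial `x_a^⟨n⟩ = (x+a)(x+a+1)⋯(x+a+n−1)`. -/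
def ascFac {F : Type*} [Field F] {A : Type*} [Ring A] [Algebra F A]
    (x : A) (a : F) : ℕ → A
  | 0 => 1
  | n + 1 => ascFac x a n * (x + algebraMap F A (a + n))

/-- The shifted falling factorial `x_a^[n] = (x+a)(x+a−1)⋯(x+a−n+1)`. -/
def descFac {F : Type*} [Field F] {A : Type*} [Ring A] [Algebra F A]
    (x : A) (a : F) : ℕ → A
  | 0 => 1
  | n + 1 => descFac x a n * (x + algebraMap F A (a - n))

/-- The generalized binomial coefficient `binom(c,r) = c(c−1)⋯(c−r+1)/r!`. -/
def gbinom {F : Type*} [Field F] (c : F) (r : ℕ) : F :=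
  (∏ j ∈ Finset.range r, (c - j)) / r.factorial

/-- `u_a = ∑_{r≥0} ((−1)^r/r!) h_{−a}^[r] e^r t^r ∈ A[[t]]`. -/
noncomputable def uSer {F : Type*} [Field F] {A : Type*} [Ring A] [Algebra F A]
    (h e : A) (a : F) : PowerSeries A :=
  PowerSeries.mk fun r => (((-1 : F) ^ r / r.factorial) • (descFac h (-a) r * e ^ r))

/-- `v_a = ∑_{r≥0} (1/r!) h_a^[r] e^r t^r ∈ A[[t]]`. -/
noncomputable def vSer {F : Type*} [Field F] {A : Type*} [Ring A] [Algebra F A]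
    (h e : A) (a : F) : PowerSeries A :=
  PowerSeries.mk fun r => (((r.factorial : F)⁻¹) • (descFac h a r * e ^ r))

/-- `(1−et)^c = ∑_{r≥0} (−1)^r binom(c,r) e^r t^r ∈ A[[t]]`. -/
noncomputable def onePow {F : Type*} [Field F] {A : Type*} [Ring A] [Algebra F A]
    (e : A) (c : F) : PowerSeries A :=
  PowerSeries.mk fun r => (((-1 : F) ^ r * gbinom c r) • e ^ r)


open Finset Polynomial

section scalar
variable {F : Type*} [Field F] [CharZero F]

lemma gbinom_eq_choose (c : F) (r : ℕ) : gbinom c r = Ring.choose c r := by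
  have h2 : (descPochhammer ℤ r).smeval c = ∏ j ∈ Finset.range r, (c - j) := by
    induction r with
    | zero => simp
    | succ n ih =>
      rw [descPochhammer_succ_right, prod_range_succ, ← ih, smeval_mul, smeval_sub, smeval_X,
        smeval_natCast]
      simp [pow_one]
  have h := Ring.descPochhammer_eq_factorial_smul_choose c r
  rw [h2, nsmul_eq_mul] at h
  rw [gbinom, h, mul_comm, mul_div_assoc, div_self (by exact_mod_cast r.factorial_ne_zero),
    mul_one]

lemma gbinom_vandermonde (s t : F) (r : ℕ) :
    gbinom (s + t) r = ∑ p ∈ antidiagonal r, gbinom s p.1 * gbinom t p.2 := by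
  simp only [gbinom_eq_choose]; exact Ring.add_choose_eq r (Commute.all s t)

lemma prod_shift_reflect (c : F) (r : ℕ) :
    ∏ j ∈ range r, (c + j) = ∏ j ∈ range r, (c + r - 1 - j) := by
  induction r with
  | zero => simp
  | succ n ih =>
    rw [prod_range_succ, prod_range_succ' (fun j : ℕ => c + (n+1:ℕ) - 1 - j)]
    push_cast
    have : ∀ j ∈ range n, c + ((n:F) + 1) - 1 - ((j:F) + 1) = c + n - 1 - j := fun j _ => by ring
    rw [prod_congr rfl this, ← ih]
    congr 1
    ring

lemma neg_one_pow_mul_prod (c : F) (r : ℕ) :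
    (-1 : F) ^ r * ∏ j ∈ range r, (-c - j) = ∏ j ∈ range r, (c + r - 1 - j) := by
  have h1 : ∏ j ∈ range r, (c + (j:F)) = ∏ j ∈ range r, ((-1 : F) * (-c - j)) :=
    prod_congr rfl (fun j _ => by ring)
  rw [← prod_shift_reflect, h1, prod_mul_distrib, prod_const, card_range]

lemma gbinom_neg (c : F) (r : ℕ) :
    (-1 : F) ^ r * gbinom (-c) r = gbinom (c + r - 1) r := by
  unfold gbinom
  rw [mul_div_assoc', ← neg_one_pow_mul_prod]

lemma scalar_key (a b x : F) (r : ℕ) :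
    (∑ p ∈ antidiagonal r, ((-1 : F) ^ p.2 / (p.1.factorial * p.2.factorial)) *
      ((∏ i ∈ range p.1, (x + (a - i))) * ∏ j ∈ range p.2, (x + (-b - p.1 - j)))) =
    (-1 : F) ^ r * gbinom (-(a + b)) r := by
  rw [gbinom_neg, show (a + b + (r:F) - 1) = (x + a) + (b + r - 1 - x) by ring,
    gbinom_vandermonde]
  refine sum_congr rfl (fun p hp => ?_)
  obtain ⟨n, m⟩ := p
  have hr : n + m = r := mem_antidiagonal.mp hp
  simp only
  have e1 : gbinom (x + a) n = (∏ i ∈ range n, (x + (a - i))) / n.factorial := by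
    unfold gbinom; congr 1; exact prod_congr rfl (fun i _ => by ring)
  have e2 : gbinom (b + r - 1 - x) m
      = ((-1 : F) ^ m * ∏ j ∈ range m, (x + (-b - n - j))) / m.factorial := by
    have p1 : (∏ j ∈ range m, (b + ((n:F) + (m:F)) - 1 - x - j))
        = ∏ j ∈ range m, ((b + n - x) + m - 1 - j) := prod_congr rfl (fun j _ => by ring)
    have p2 : (∏ j ∈ range m, (-(b + (n:F) - x) - j))
        = ∏ j ∈ range m, (x + (-b - n - j)) := prod_congr rfl (fun j _ => by ring)
    unfold gbinom
    rw [← hr]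
    push_cast
    rw [p1, ← neg_one_pow_mul_prod, p2]
  rw [e1, e2]
  ring
end scalar

section alg
variable {F : Type*} [Field F] {A : Type*} [Ring A] [Algebra F A]

lemma pow_mul_h (h e : A) (he : h * e - e * h = e) (n : ℕ) :
    e ^ n * h = h * e ^ n - algebraMap F A n * e ^ n := by
  induction n with
  | zero => simp
  | succ n ih =>
    have heh : e * h = h * e - e := by
      have h2 : e * h + (h * e - e * h) = h * e := by noncomm_ring
      rw [he] at h2
      exact eq_sub_of_add_eq h2
    rw [pow_succ, mul_assoc, heh, mul_sub, ← mul_assoc, ih]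
    push_cast
    noncomm_ring

lemma pow_mul_lin (h e : A) (he : h * e - e * h = e) (n : ℕ) (d : F) :
    e ^ n * (h + algebraMap F A d) = (h + algebraMap F A (d - n)) * e ^ n := by
  rw [mul_add, pow_mul_h (F := F) h e he n, ← Algebra.commutes (R := F) d (e ^ n), add_mul, map_sub, sub_mul]
  abel

lemma pow_mul_descFac (h e : A) (he : h * e - e * h = e) (n : ℕ) (c : F) (m : ℕ) :
    e ^ n * descFac h c m = descFac h (c - n) m * e ^ n := by
  induction m with
  | zero => simp [descFac]
  | succ m ih =>
    show e ^ n * (descFac h c m * (h + algebraMap F A (c - m)))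
      = descFac h (c - n) m * (h + algebraMap F A (c - n - m)) * e ^ n
    rw [← mul_assoc, ih, mul_assoc, pow_mul_lin h e he n (c - m), ← mul_assoc]
    congr 3
    ring

lemma descFac_aeval (h : A) (c : F) (n : ℕ) :
    descFac h c n = aeval h (∏ j ∈ range n, (X + C (c - j))) := by
  induction n with
  | zero => simp [descFac]
  | succ n ih =>
    show descFac h c n * (h + algebraMap F A (c - n)) = _
    rw [prod_range_succ, map_mul, ih, map_add, aeval_X, aeval_C]
end alg

lemma poly_key {F : Type*} [Field F] [CharZero F] (a b : F) (r : ℕ) :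
    (∑ p ∈ antidiagonal r, C ((-1 : F) ^ p.2 / (p.1.factorial * p.2.factorial)) *
      ((∏ i ∈ range p.1, (X + C (a - i))) * ∏ j ∈ range p.2, (X + C (-b - p.1 - j))))
    = C ((-1 : F) ^ r * gbinom (-(a + b)) r) := by
  apply Polynomial.funext
  intro x
  simp only [eval_finset_sum, eval_mul, eval_C, eval_prod, eval_add, eval_X]
  exact scalar_key a b x r

/-- **Lemma 2.2, second identity**: if `h·e − e·h = e` then `v_a · u_b = (1−et)^{−(a+b)}`. -/
theorem vSer_mul_uSer {F : Type*} [Field F] [CharZero F]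
    {A : Type*} [Ring A] [Algebra F A] (h e : A) (he : h * e - e * h = e) (a b : F) :
    vSer h e a * uSer h e b = onePow (F := F) e (-(a + b)) := by
  ext r
  rw [PowerSeries.coeff_mul]
  simp only [vSer, uSer, onePow, PowerSeries.coeff_mk]
  have hterm : ∀ p ∈ antidiagonal r,
      ((p.1.factorial : F)⁻¹ • (descFac h a p.1 * e ^ p.1)) *
        (((-1 : F) ^ p.2 / p.2.factorial) • (descFac h (-b) p.2 * e ^ p.2))
      = (((-1 : F) ^ p.2 / (p.1.factorial * p.2.factorial)) •
          (descFac h a p.1 * descFac h (-b - p.1) p.2)) * e ^ r := by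
    intro p hp
    obtain ⟨n, m⟩ := p
    have hr : n + m = r := mem_antidiagonal.mp hp
    simp only
    rw [smul_mul_assoc, smul_mul_assoc, mul_smul_comm, smul_smul]
    congr 1
    · ring
    · have hc := pow_mul_descFac h e he n (-b) m
      rw [mul_assoc, ← mul_assoc (e ^ n), hc, ← hr, pow_add]
      noncomm_ring
  rw [sum_congr rfl hterm, ← sum_mul]
  suffices hA : (∑ p ∈ antidiagonal r,
      ((-1 : F) ^ p.2 / (p.1.factorial * p.2.factorial)) •
        (descFac h a p.1 * descFac h (-b - p.1) p.2))
      = ((-1 : F) ^ r * gbinom (-(a + b)) r) • (1 : A) by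
    rw [hA, smul_mul_assoc, one_mul]
  have hkey := congrArg (Polynomial.aeval h : Polynomial F →ₐ[F] A) (poly_key (F := F) a b r)
  simp only [map_sum, map_mul, aeval_C] at hkey
  simp only [descFac_aeval h, Algebra.smul_def, mul_one]
  rw [map_mul]
  exact hkey
end

section
/- Let F be a field of characteristic 0, A a unital associative F-algebra, and let h, e, y ∈ A and c ∈ F satisfy h·y − y·h = c·y. Then for every a ∈ F and every natural number s, the identity (y^s ⊗ 1) · F_a = F_{a−sc} · (y^s ⊗ 1) holds in (A ⊗_F A)[[t]]. (Lemma 2.6, formula (14).) -/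
open scoped TensorProduct

/-- `F_a = ∑_{r≥0} (1/r!) (h_a^⟨r⟩ ⊗ e^r) t^r ∈ (A ⊗_F A)[[t]]`. -/
noncomputable def bigF {F : Type*} [Field F] {A : Type*} [Ring A] [Algebra F A]
    (h e : A) (a : F) : PowerSeries (A ⊗[F] A) :=
  PowerSeries.mk fun r => (((r.factorial : F)⁻¹) • (ascFac h a r ⊗ₜ[F] e ^ r))

lemma h_mul_pow {F : Type*} [Field F] {A : Type*} [Ring A] [Algebra F A]
    (h y : A) (c : F) (hy : h * y - y * h = c • y) (s : ℕ) :
    h * y ^ s = y ^ s * (h + algebraMap F A (s * c)) := by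
  induction s with
  | zero => simp
  | succ s ih =>
    have h1 : h * y = y * (h + algebraMap F A c) := by
      have := sub_eq_iff_eq_add.mp hy
      rw [this, Algebra.smul_def, mul_add, ← Algebra.commutes c y]
      abel
    rw [pow_succ', ← mul_assoc, h1, mul_assoc, add_mul, ih, Algebra.commutes c (y ^ s)]
    push_cast
    noncomm_ring

lemma ascFac_mul_pow {F : Type*} [Field F] {A : Type*} [Ring A] [Algebra F A]
    (h y : A) (c : F) (hy : h * y - y * h = c • y) (a : F) (s r : ℕ) :
    ascFac h (a - s * c) r * y ^ s = y ^ s * ascFac h a r := by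
  induction r with
  | zero => simp [ascFac]
  | succ r ih =>
    rw [ascFac, ascFac, mul_assoc, add_mul, h_mul_pow h y c hy s,
      Algebra.commutes (a - s*c + r) (y ^ s),
      ← mul_add, ← mul_assoc, ih, mul_assoc]
    congr 2
    rw [add_assoc, ← map_add]
    congr 2
    ring

/-- **Lemma 2.6, formula (14)**: if `h·y − y·h = c·y` then
`(y^s ⊗ 1) · F_a = F_{a−sc} · (y^s ⊗ 1)` in `(A ⊗_F A)[[t]]`. -/
theorem tmul_pow_mul_bigF {F : Type*} [Field F] [CharZero F]
    {A : Type*} [Ring A] [Algebra F A] (h e y : A) (c : F)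
    (hy : h * y - y * h = c • y) (a : F) (s : ℕ) :
    PowerSeries.C (R := A ⊗[F] A) ((y ^ s) ⊗ₜ[F] (1 : A)) * bigF h e a =
      bigF h e (a - s * c) * PowerSeries.C (R := A ⊗[F] A) ((y ^ s) ⊗ₜ[F] (1 : A)) := by
  ext r
  simp only [bigF, PowerSeries.coeff_C_mul, PowerSeries.coeff_mul_C, PowerSeries.coeff_mk]
  have sc1 : SemiconjBy (y ^ s) (ascFac h a r) (ascFac h (a - s * c) r) :=
    (ascFac_mul_pow h y c hy a s r).symm
  have sc2 : SemiconjBy ((y ^ s) ⊗ₜ[F] (1 : A)) (ascFac h a r ⊗ₜ[F] e)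
      (ascFac h (a - s * c) r ⊗ₜ[F] e) := sc1.tmul (SemiconjBy.one_left e)
  have sc3 := sc2.pow_right r
  rw [mul_smul_comm, smul_mul_assoc, sc3.eq]
end

section
/- Let F be a field of characteristic 0, A a unital associative F-algebra, and let h, e, y ∈ A and c ∈ F satisfy h·e − e·h = e and h·y − y·h = c·y. Write u := u_0 and v := v_0. Then for every natural number s ≥ 1, the identity v · y^s · u = (1−et)^{−sc} · (∑_{ℓ≥0} d^(ℓ)(y^s) · h_1^⟨ℓ⟩ · t^ℓ) holds in A[[t]]. (Lemma 2.8 (ii); in the paper the twisted antipode satisfies S(y^s) = (−1)^s v·y^s·u, so this is the identity S((x^α∂)^s) = (−1)^s (1−et)^{−sc} ∑_ℓ d^(ℓ)((x^α∂)^s)·h_1^⟨ℓ⟩ t^ℓ.) -/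
/-- `d^(ℓ)(y) = (1/ℓ!)·(ad e)^ℓ(y)` where `(ad e)(y) = e·y − y·e`. -/
noncomputable def dpow (F : Type*) [Field F] {A : Type*} [Ring A] [Algebra F A]
    (e : A) (ℓ : ℕ) (y : A) : A :=
  ((ℓ.factorial : F)⁻¹) • ((fun z => e * z - z * e)^[ℓ] y)

section L28s
open Finset

variable {F : Type*} [Field F] {A : Type*} [Ring A] [Algebra F A]

def betaF (μ : F) (r : ℕ) : F := (∏ j ∈ Finset.range r, (μ + j)) / r.factorial

lemma beta_eq (μ : F) (r : ℕ) : (-1:F)^r * gbinom (-μ) r = betaF μ r := by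
  unfold gbinom betaF
  rw [← mul_div_assoc]
  congr 1
  have h0 : ∏ j ∈ range r, (-μ - (j:F)) = ∏ j ∈ range r, ((-1) * (μ + j)) :=
    Finset.prod_congr rfl fun j _ => by ring
  rw [h0, Finset.prod_mul_distrib, Finset.prod_const, Finset.card_range,
    ← mul_assoc, ← mul_pow]
  norm_num

lemma betaF_zero (μ : F) : betaF μ 0 = 1 := by simp [betaF]

lemma betaF_succ [CharZero F] (μ : F) (r : ℕ) :
    betaF μ (r+1) = ((r+1 : F))⁻¹ * ((μ + r) * betaF μ r) := by
  unfold betaF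
  rw [Finset.prod_range_succ, Nat.factorial_succ]
  have h1 : ((r:F)+1) ≠ 0 := Nat.cast_add_one_ne_zero r
  have h2 : ((r.factorial : F)) ≠ 0 := Nat.cast_ne_zero.2 r.factorial_ne_zero
  push_cast
  field_simp

lemma betaF_s4 [CharZero F] (μ : F) (k p : ℕ) :
    betaF μ (k+p) * ((k+p).choose p : F) * (p.factorial : F)
      = betaF μ k * ∏ q ∈ range p, (μ + k + q) := by
  unfold betaF
  rw [Finset.prod_range_add, Nat.cast_choose F (Nat.le_add_left p k)]
  have h1 : ((k+p).factorial : F) ≠ 0 := Nat.cast_ne_zero.2 (Nat.factorial_ne_zero _)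
  have h2 : ((p).factorial : F) ≠ 0 := Nat.cast_ne_zero.2 (Nat.factorial_ne_zero _)
  have h3 : ((k).factorial : F) ≠ 0 := Nat.cast_ne_zero.2 (Nat.factorial_ne_zero _)
  have h4 : (k+p-p) = k := by omega
  rw [h4]
  have h5 : ∏ q ∈ range p, (μ + ((k + q : ℕ):F)) = ∏ q ∈ range p, (μ + ↑k + ↑q) :=
    Finset.prod_congr rfl fun q _ => by push_cast; ring
  rw [h5]
  field_simp

end L28s

section Alg
variable {F : Type*} [Field F] {A : Type*} [Ring A] [Algebra F A]

lemma commute_lin (x : A) (b c : F) :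
    Commute (x + algebraMap F A b) (x + algebraMap F A c) := by
  have hb : Commute (algebraMap F A b) x := (Algebra.commutes b x)
  have hc : Commute (algebraMap F A c) x := (Algebra.commutes c x)
  have hbc : Commute (algebraMap F A b) (algebraMap F A c) := (Algebra.commutes b _)
  exact Commute.add_left ((Commute.refl x).add_right hc.symm) (hb.add_right hbc)

lemma commute_ascFac (x : A) (b a : F) (m : ℕ) :
    Commute (x + algebraMap F A b) (ascFac x a m) := by
  induction m with
  | zero => exact Commute.one_right _
  | succ m ih => exact ih.mul_right (commute_lin x b _)

lemma commute_descFac (x : A) (b a : F) (m : ℕ) :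
    Commute (x + algebraMap F A b) (descFac x a m) := by
  induction m with
  | zero => exact Commute.one_right _
  | succ m ih => exact ih.mul_right (commute_lin x b _)

lemma commute_x_descFac (x : A) (a : F) (m : ℕ) : Commute x (descFac x a m) := by
  simpa using commute_descFac x 0 a m

/-- front-pull for ascFac -/
lemma ascFac_succ' (x : A) (a : F) (m : ℕ) :
    ascFac x a (m+1) = (x + algebraMap F A a) * ascFac x (a+1) m := by
  induction m with
  | zero => simp [ascFac]
  | succ m ih =>
    rw [show ascFac x a (m+1+1) = ascFac x a (m+1) * (x + algebraMap F A (a + (m+1 : ℕ))) from rfl,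
      ih, show ascFac x (a+1) (m+1) = ascFac x (a+1) m * (x + algebraMap F A (a+1 + (m : ℕ))) from rfl,
      mul_assoc]
    congr 2
    push_cast
    abel

/-- front-pull for descFac -/
lemma descFac_succ' (x : A) (a : F) (m : ℕ) :
    descFac x a (m+1) = (x + algebraMap F A a) * descFac x (a-1) m := by
  induction m with
  | zero => simp [descFac]
  | succ m ih =>
    rw [show descFac x a (m+1+1) = descFac x a (m+1) * (x + algebraMap F A (a - (m+1 : ℕ))) from rfl,
      ih, show descFac x (a-1) (m+1) = descFac x (a-1) m * (x + algebraMap F A (a-1 - (m : ℕ))) from rfl,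
      mul_assoc]
    congr 2
    push_cast
    abel

lemma descFac_add (x : A) (a : F) (m r : ℕ) :
    descFac x a (m + r) = descFac x a m * descFac x (a - m) r := by
  induction r with
  | zero => simp [descFac]
  | succ r ih =>
    rw [show m + (r+1) = (m+r)+1 from rfl,
      show descFac x a ((m+r)+1) = descFac x a (m+r) * (x + algebraMap F A (a - ((m+r : ℕ)))) from rfl,
      ih, show descFac x (a - m) (r+1) = descFac x (a-m) r * (x + algebraMap F A (a - m - (r:ℕ))) from rfl,
      mul_assoc]
    congr 2
    push_cast
    abel

lemma descFac_eq_ascFac (x : A) (a : F) (m : ℕ) :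
    descFac x (a + m) m = ascFac x (a + 1) m := by
  induction m generalizing a with
  | zero => simp [descFac, ascFac]
  | succ m ih =>
    have h1 : descFac x (a + (m+1 : ℕ)) (m+1)
        = descFac x (a + (m+1:ℕ)) m * (x + algebraMap F A (a + (m+1:ℕ) - (m:ℕ))) := rfl
    have h2 : a + ((m+1 : ℕ) : F) = (a + 1) + ((m:ℕ) : F) := by push_cast; ring
    have h3 : a + ((m+1 : ℕ) : F) - ((m:ℕ):F) = a + 1 := by push_cast; ring
    rw [h1, h3, h2, ih (a+1)]
    rw [← (commute_ascFac x (a+1) (a+1+1) m).eq]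
    exact (ascFac_succ' x (a+1) m).symm

/-- commutation of descFac with an h-eigen element -/
lemma descFac_mul_comm {h z : A} {ν : F} (hz : h * z = z * h + ν • z) (a : F) (r : ℕ) :
    descFac h a r * z = z * descFac h (a + ν) r := by
  induction r with
  | zero => simp [descFac]
  | succ r ih =>
    have key : (h + algebraMap F A (a - r)) * z = z * (h + algebraMap F A (a + ν - r)) := by
      rw [add_mul, hz, Algebra.commutes, mul_add]
      rw [show algebraMap F A (a + ν - r) = algebraMap F A ν + algebraMap F A (a - r) by
        rw [← map_add]; congr 1; ring]
      rw [mul_add, Algebra.smul_def, Algebra.commutes]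
      abel
    rw [show descFac h a (r+1) = descFac h a r * (h + algebraMap F A (a - (r:ℕ))) from rfl,
      mul_assoc, key, ← mul_assoc, ih, mul_assoc]
    rfl

lemma ascFac_mul_comm {h z : A} {ν : F} (hz : h * z = z * h + ν • z) (a : F) (r : ℕ) :
    ascFac h a r * z = z * ascFac h (a + ν) r := by
  induction r with
  | zero => simp [ascFac]
  | succ r ih =>
    have key : (h + algebraMap F A (a + r)) * z = z * (h + algebraMap F A (a + ν + r)) := by
      rw [add_mul, hz, Algebra.commutes, mul_add]
      rw [show algebraMap F A (a + ν + r) = algebraMap F A ν + algebraMap F A (a + r) by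
        rw [← map_add]; congr 1; ring]
      rw [mul_add, Algebra.smul_def, Algebra.commutes]
      abel
    rw [show ascFac h a (r+1) = ascFac h a r * (h + algebraMap F A (a + (r:ℕ))) from rfl,
      mul_assoc, key, ← mul_assoc, ih, mul_assoc]
    rfl

/-- h * e^k = e^k * h + k • e^k -/
lemma h_mul_pow_s16 {h e : A} (he : h * e = e * h + (1:F) • e) (k : ℕ) :
    h * e ^ k = e ^ k * h + (k : F) • e ^ k := by
  induction k with
  | zero => simp
  | succ k ih =>
    rw [pow_succ', ← mul_assoc, he, add_mul, smul_mul_assoc, mul_assoc, ih, mul_add,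
      ← mul_assoc, ← pow_succ', mul_smul_comm, ← pow_succ']
    push_cast
    rw [add_smul, one_smul]
    abel

end Alg

section Alg2
variable {F : Type*} [Field F] {A : Type*} [Ring A] [Algebra F A]
open Finset

lemma pascal_sum (w : ℕ → F) (f : ℕ → A) (n : ℕ) :
    ∑ m ∈ range (n+1+1), (((n+1).choose m : F) * w m) • f m
      = ∑ m ∈ range (n+1), ((n.choose m : F) * w (m+1)) • f (m+1)
        + ∑ m ∈ range (n+1), ((n.choose m : F) * w m) • f m := by
  rw [Finset.sum_range_succ' (fun m => (((n+1).choose m : F) * w m) • f m) (n+1)]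
  have h1 : ∀ m, (((n+1).choose (m+1) : F) * w (m+1)) • f (m+1)
      = ((n.choose m : F) * w (m+1)) • f (m+1) + ((n.choose (m+1) : F) * w (m+1)) • f (m+1) := by
    intro m
    rw [Nat.choose_succ_succ, Nat.cast_add, add_mul, add_smul]
  simp only [h1]
  rw [Finset.sum_add_distrib, add_assoc]
  congr 1
  have h2 : (((n+1).choose 0 : F) * w 0) • f 0 = ((n.choose 0 : F) * w 0) • f 0 := by simp
  rw [h2, ← Finset.sum_range_succ' (fun m => ((n.choose m : F) * w m) • f m) (n+1),
      Finset.sum_range_succ]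
  simp [Nat.choose_succ_self]

lemma pow_mul_expand (e z : A) (n : ℕ) :
    e ^ n * z = ∑ m ∈ range (n+1),
      ((n.choose m : F)) • (((fun w => e*w - w*e)^[m] z) * e ^ (n - m)) := by
  induction n with
  | zero => simp
  | succ n ih =>
    have hT : ∀ m, e * ((fun w => e*w - w*e)^[m] z)
        = ((fun w => e*w - w*e)^[m+1] z) + ((fun w => e*w - w*e)^[m] z) * e := by
      intro m
      rw [Function.iterate_succ_apply']
      show e * _ = (e * _ - _ * e) + _ * e
      rw [sub_add_cancel]
    rw [pow_succ', mul_assoc, ih, Finset.mul_sum]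
    have step : ∀ m ∈ range (n+1),
        e * ((n.choose m : F) • (((fun w => e*w - w*e)^[m] z) * e ^ (n-m)))
        = (n.choose m : F) • (((fun w => e*w - w*e)^[m+1] z) * e ^ (n - m))
          + (n.choose m : F) • (((fun w => e*w - w*e)^[m] z) * e ^ ((n - m) + 1)) := by
      intro m _
      rw [mul_smul_comm, ← mul_assoc, hT m, add_mul, mul_assoc, ← pow_succ', smul_add]
    rw [Finset.sum_congr rfl step, Finset.sum_add_distrib]
    have hps := pascal_sum (fun _ => (1:F))
      (fun m => ((fun w => e*w - w*e)^[m] z) * e ^ (n+1-m)) n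
    simp only [mul_one, Nat.succ_sub_succ] at hps
    rw [hps]
    congr 1
    refine Finset.sum_congr rfl fun m hm => ?_
    have hm' : m ≤ n := by have := Finset.mem_range.mp hm; omega
    rw [show n - m + 1 = n + 1 - m by omega]

lemma hD_comm {h e Y : A} {μ : F} (he : h*e = e*h + (1:F) • e) (hY : h*Y = Y*h + μ • Y) (ℓ : ℕ) :
    h * ((fun w => e*w - w*e)^[ℓ] Y)
      = ((fun w => e*w - w*e)^[ℓ] Y) * h + (μ + (ℓ:F)) • ((fun w => e*w - w*e)^[ℓ] Y) := by
  induction ℓ with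
  | zero => simpa using hY
  | succ ℓ ih =>
    rw [Function.iterate_succ_apply']
    set D := (fun w => e*w - w*e)^[ℓ] Y with hD
    show h * (e * D - D * e) = (e * D - D * e) * h + (μ + ((ℓ+1 : ℕ):F)) • (e * D - D * e)
    have h1 : h * (e * D) = (e*D)*h + ((μ+(ℓ:F))+1) • (e*D) := by
      rw [← mul_assoc, he, add_mul, smul_mul_assoc, mul_assoc, ih, mul_add, ← mul_assoc,
        mul_smul_comm, add_smul, one_smul]
      module
    have h2 : h * (D * e) = (D*e)*h + ((μ+(ℓ:F))+1) • (D*e) := by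
      rw [← mul_assoc, ih, add_mul, smul_mul_assoc, mul_assoc, he, mul_add, ← mul_assoc,
        mul_smul_comm, add_smul, one_smul]
      module
    rw [mul_sub, h1, h2, show (μ + ((ℓ+1 : ℕ):F)) = (μ + (ℓ:F)) + 1 by push_cast; ring,
      sub_mul, smul_sub]
    module

lemma descFac_diff (h : A) (j : ℕ) :
    descFac h (0:F) (j+1) - descFac h (-1:F) (j+1)
      = ((j+1 : ℕ) : F) • descFac h (-1:F) j := by
  have h1 : descFac h (0:F) (j+1) = h * descFac h (-1:F) j := by
    have := descFac_succ' h (0:F) j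
    simpa using this
  have h2 : descFac h (-1:F) (j+1)
      = descFac h (-1:F) j * (h + algebraMap F A (-1 - (j:ℕ))) := rfl
  rw [h1, h2, (commute_x_descFac h (-1:F) j).eq, mul_add]
  rw [show ((-1 : F) - ((j:ℕ):F)) = -(((j+1:ℕ):F)) by push_cast; ring, map_neg, mul_neg]
  rw [show ((j+1:ℕ):F) • descFac h (-1:F) j
      = descFac h (-1:F) j * algebraMap F A ((j+1:ℕ):F) by
    rw [Algebra.smul_def, Algebra.commutes]]
  abel

lemma asc_vandermonde (x : A) (b β : F) (m : ℕ) :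
    ascFac x (b + β) m = ∑ p ∈ range (m+1),
      ((m.choose p : F) * ∏ q ∈ range p, (β + q)) • ascFac x b (m - p) := by
  induction m with
  | zero => simp [ascFac]
  | succ m ih =>
    rw [show ascFac x (b+β) (m+1)
        = ascFac x (b+β) m * (x + algebraMap F A (b + β + (m:ℕ))) from rfl, ih, Finset.sum_mul]
    have step : ∀ p ∈ range (m+1),
        (((m.choose p : F) * ∏ q ∈ range p, (β + q)) • ascFac x b (m - p))
            * (x + algebraMap F A (b + β + (m:ℕ)))
        = ((m.choose p : F) * ∏ q ∈ range (p+1), (β + q)) • ascFac x b (m - p)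
          + ((m.choose p : F) * ∏ q ∈ range p, (β + q)) • ascFac x b ((m - p) + 1) := by
      intro p hp
      have hp' : p ≤ m := by have := Finset.mem_range.mp hp; omega
      rw [smul_mul_assoc]
      have hsplit : (x + algebraMap F A (b + β + (m:ℕ)))
          = (x + algebraMap F A (b + ((m-p : ℕ):F))) + algebraMap F A (β + (p:F)) := by
        rw [add_assoc x, ← map_add]
        congr 1
        have : ((m - p : ℕ) : F) = (m : F) - (p : F) := by
          rw [Nat.cast_sub hp']
        rw [this]
        ring
      rw [hsplit, mul_add]
      rw [show ascFac x b (m-p) * (x + algebraMap F A (b + ((m-p : ℕ):F)))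
          = ascFac x b ((m-p)+1) from rfl]
      rw [show ascFac x b (m-p) * algebraMap F A (β + (p:F))
          = (β + (p:F)) • ascFac x b (m-p) by rw [Algebra.smul_def, Algebra.commutes]]
      rw [smul_add, smul_smul, mul_assoc, ← Finset.prod_range_succ]
      rw [add_comm]
    rw [Finset.sum_congr rfl step, Finset.sum_add_distrib]
    have hps := pascal_sum (fun p => ∏ q ∈ range p, (β + (q:F)))
      (fun p => ascFac x b (m+1-p)) m
    simp only [Nat.succ_sub_succ] at hps
    rw [hps]
    congr 1
    refine Finset.sum_congr rfl fun p hp => ?_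
    have hp' : p ≤ m := by have := Finset.mem_range.mp hp; omega
    rw [show (m - p) + 1 = m + 1 - p by omega]

end Alg2

noncomputable section Ser
variable {F : Type*} [Field F] {A : Type*} [Ring A] [Algebra F A]
open Finset PowerSeries

lemma coeff_vSer (h e : A) (a : F) (n : ℕ) :
    PowerSeries.coeff n (vSer h e a) = ((n.factorial : F)⁻¹) • (descFac h a n * e ^ n) :=
  PowerSeries.coeff_mk _ _

lemma lemA [CharZero F] {h e Y : A} {μ : F} (he : h*e = e*h + (1:F) • e) (hY : h*Y = Y*h + μ • Y) :
    vSer h e (0:F) * PowerSeries.C Y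
      = PowerSeries.mk (fun m => (((m.factorial : F)⁻¹) • ((fun w => e*w - w*e)^[m] Y))
          * ascFac h (μ+1) m) * vSer h e μ := by
  have term : ∀ m j : ℕ, descFac h (0:F) (m+j) * (((fun w => e*w - w*e)^[m] Y) * e^j)
      = ((fun w => e*w - w*e)^[m] Y) * (ascFac h (μ+1) m * (descFac h μ j * e^j)) := by
    intro m j
    rw [← mul_assoc, descFac_mul_comm (hD_comm he hY m) (0:F) (m+j), zero_add,
      descFac_add h (μ + ((m:ℕ):F)) m j, show μ + ((m:ℕ):F) - ((m:ℕ):F) = μ by ring,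
      descFac_eq_ascFac h μ m, mul_assoc, mul_assoc]
  ext n
  rw [PowerSeries.coeff_mul_C, PowerSeries.coeff_mul]
  rw [Finset.Nat.sum_antidiagonal_eq_sum_range_succ (fun i j =>
    (PowerSeries.coeff i (PowerSeries.mk fun m => (((m.factorial : F)⁻¹)
        • ((fun w => e*w - w*e)^[m] Y)) * ascFac h (μ+1) m))
      * (PowerSeries.coeff j (vSer h e μ))) n]
  simp only [vSer, PowerSeries.coeff_mk]
  rw [smul_mul_assoc, mul_assoc, pow_mul_expand (F := F) e Y n, Finset.mul_sum]
  rw [Finset.smul_sum]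
  refine Finset.sum_congr rfl fun m hm => ?_
  have hm' : m ≤ n := by have := Finset.mem_range.mp hm; omega
  have t := term m (n - m)
  rw [show m + (n-m) = n by omega] at t
  rw [mul_smul_comm, t]
  simp only [smul_smul, smul_mul_assoc, mul_smul_comm, mul_assoc]
  congr 1
  rw [Nat.cast_choose F hm']
  have h2 : ((m.factorial : F)) ≠ 0 := Nat.cast_ne_zero.2 (Nat.factorial_ne_zero _)
  have h3 : (((n-m).factorial : F)) ≠ 0 := Nat.cast_ne_zero.2 (Nat.factorial_ne_zero _)
  have h4 : ((n.factorial : F)) ≠ 0 := Nat.cast_ne_zero.2 (Nat.factorial_ne_zero _)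
  field_simp

end Ser

noncomputable section SerB
variable {F : Type*} [Field F] {A : Type*} [Ring A] [Algebra F A]
open Finset PowerSeries

lemma coeff_uSer (h e : A) (n : ℕ) :
    PowerSeries.coeff n (uSer h e (0:F))
      = (((-1:F)^n / n.factorial)) • (descFac h (0:F) n * e ^ n) := by
  simp [uSer, PowerSeries.coeff_mk]

lemma lin_shift {h e : A} (he : h*e = e*h + (1:F) • e) (k : ℕ) (a : F) :
    (h + algebraMap F A a) * e^k = e^k * (h + algebraMap F A (a + (k:ℕ))) := by
  rw [add_mul, h_mul_pow_s16 he k, Algebra.commutes, mul_add]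
  rw [show algebraMap F A (a + ((k:ℕ):F)) = algebraMap F A ((k:ℕ):F) + algebraMap F A a by
    rw [← map_add]; congr 1; ring]
  rw [mul_add]
  have hk : e^k * algebraMap F A ((k:ℕ):F) = ((k:ℕ):F) • e^k := by
    rw [← Algebra.commutes, ← Algebra.smul_def]
  rw [hk]
  abel

lemma vRec [CharZero F] {h e : A} {μ : F} (he : h*e = e*h + (1:F) • e) (i : ℕ) :
    (((i+1:ℕ)):F) • PowerSeries.coeff (i+1) (vSer h e μ)
      = PowerSeries.coeff i (vSer h e μ) * (e * (h + algebraMap F A (μ+1))) := by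
  rw [coeff_vSer, coeff_vSer]
  have h1 : descFac h μ (i+1) * e^(i+1)
      = (descFac h μ i * e^i) * (e * (h + algebraMap F A (μ+1))) := by
    rw [show descFac h μ (i+1) = descFac h μ i * (h + algebraMap F A (μ - ((i:ℕ):F))) from rfl,
      mul_assoc, lin_shift he (i+1) (μ - ((i:ℕ):F)),
      show μ - ((i:ℕ):F) + (((i+1:ℕ)):F) = μ + 1 by push_cast; ring]
    simp only [pow_succ, mul_assoc]
  rw [smul_smul, h1, smul_mul_assoc]
  congr 1
  rw [Nat.factorial_succ]
  have h2 : ((i.factorial : F)) ≠ 0 := Nat.cast_ne_zero.2 (Nat.factorial_ne_zero _)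
  have h3 : ((i:F)+1) ≠ 0 := Nat.cast_add_one_ne_zero i
  push_cast
  field_simp

lemma uRec [CharZero F] {h e : A} (he : h*e = e*h + (1:F) • e) (j : ℕ) :
    (((j+1:ℕ)):F) • PowerSeries.coeff (j+1) (uSer h e (0:F))
      = -((e * (h + algebraMap F A 1)) * PowerSeries.coeff j (uSer h e (0:F))) := by
  rw [coeff_uSer, coeff_uSer]
  have hre : ∀ r, e * descFac h (0:F) r = descFac h (-1:F) r * e := by
    intro r
    have := descFac_mul_comm (z := e) (ν := (1:F)) (by simpa using he) (-1:F) r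
    rw [show (-1:F)+1 = 0 by ring] at this
    exact this.symm
  have hxe : e^(j+1) * (h + algebraMap F A (1 + ((j:ℕ):F))) = h * e^(j+1) := by
    have h0 := lin_shift he (j+1) (0:F)
    simp only [map_zero, add_zero, zero_add] at h0
    rw [show (1 + ((j:ℕ):F)) = (((j+1:ℕ)):F) by push_cast; ring]
    exact h0.symm
  have key : (e * (h + algebraMap F A 1)) * (descFac h (0:F) j * e^j)
      = descFac h (0:F) (j+1) * e^(j+1) := by
    rw [mul_assoc, ← mul_assoc (h + algebraMap F A 1), (commute_descFac h 1 (0:F) j).eq,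
      mul_assoc (descFac h (0:F) j), lin_shift he j 1, ← mul_assoc, hre j,
      mul_assoc (descFac h (-1:F) j), ← mul_assoc e (e^j), ← pow_succ', hxe, ← mul_assoc,
      ← (commute_x_descFac h (-1:F) j).eq]
    congr 1
    have hds : descFac h (0:F) (j+1) = h * descFac h (-1:F) j := by
      simpa using descFac_succ' h (0:F) j
    rw [hds]
  rw [mul_smul_comm, key, smul_smul, ← neg_smul]
  congr 1
  rw [Nat.factorial_succ]
  have h2 : ((j.factorial : F)) ≠ 0 := Nat.cast_ne_zero.2 (Nat.factorial_ne_zero _)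
  have h3 : ((j:F)+1) ≠ 0 := Nat.cast_add_one_ne_zero j
  push_cast
  field_simp
  ring

lemma uComm [CharZero F] {h e : A} (he : h*e = e*h + (1:F) • e) (j : ℕ) :
    e * PowerSeries.coeff (j+1) (uSer h e (0:F))
      = PowerSeries.coeff (j+1) (uSer h e (0:F)) * e
        + (e * PowerSeries.coeff j (uSer h e (0:F))) * e := by
  rw [coeff_uSer, coeff_uSer]
  have hre : ∀ r, e * descFac h (0:F) r = descFac h (-1:F) r * e := by
    intro r
    have := descFac_mul_comm (z := e) (ν := (1:F)) (by simpa using he) (-1:F) r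
    rw [show (-1:F)+1 = 0 by ring] at this
    exact this.symm
  have b1 : e * (descFac h (0:F) (j+1) * e^(j+1)) = descFac h (-1:F) (j+1) * e^(j+1+1) := by
    rw [← mul_assoc, hre (j+1), mul_assoc, ← pow_succ']
  have b2 : (descFac h (0:F) (j+1) * e^(j+1)) * e = descFac h (0:F) (j+1) * e^(j+1+1) := by
    rw [mul_assoc, ← pow_succ]
  have b3 : (e * (descFac h (0:F) j * e^j)) * e = descFac h (-1:F) j * e^(j+1+1) := by
    rw [← mul_assoc, hre j, mul_assoc (descFac h (-1:F) j) e (e^j), ← pow_succ',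
      mul_assoc, ← pow_succ]
  rw [mul_smul_comm, b1, smul_mul_assoc, b2, mul_smul_comm, smul_mul_assoc, b3]
  have hd : descFac h (0:F) (j+1)
      = (((j+1:ℕ)):F) • descFac h (-1:F) j + descFac h (-1:F) (j+1) :=
    sub_eq_iff_eq_add.mp (descFac_diff h j)
  rw [hd]
  simp only [add_mul, smul_mul_assoc, smul_add, smul_smul]
  match_scalars
  · ring
  · rw [Nat.factorial_succ]
    have h2 : ((j.factorial : F)) ≠ 0 := Nat.cast_ne_zero.2 (Nat.factorial_ne_zero _)
    have h3 : ((j:F)+1) ≠ 0 := Nat.cast_add_one_ne_zero j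
    push_cast
    field_simp
    ring

end SerB

noncomputable section SerB2
variable {F : Type*} [Field F] {A : Type*} [Ring A] [Algebra F A]
open Finset PowerSeries

def Pc (h e : A) (μ : F) (n : ℕ) : A :=
  ∑ p ∈ antidiagonal n,
    PowerSeries.coeff p.1 (vSer h e μ) * PowerSeries.coeff p.2 (uSer h e (0:F))

def Sc (h e : A) (μ : F) (n : ℕ) : A :=
  ∑ p ∈ antidiagonal n,
    PowerSeries.coeff p.1 (vSer h e μ) * (e * PowerSeries.coeff p.2 (uSer h e (0:F)))

lemma B3 [CharZero F] {h e : A} {μ : F} (he : h*e = e*h + (1:F) • e) (n : ℕ) :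
    (((n+1:ℕ)):F) • Pc h e μ (n+1) = μ • Sc h e μ n := by
  rw [Pc, Finset.smul_sum]
  have e1 : ∀ p ∈ antidiagonal (n+1), (((n+1:ℕ)):F) •
        (PowerSeries.coeff p.1 (vSer h e μ) * PowerSeries.coeff p.2 (uSer h e (0:F)))
      = (((p.1:ℕ):F) • PowerSeries.coeff p.1 (vSer h e μ)) * PowerSeries.coeff p.2 (uSer h e (0:F))
        + PowerSeries.coeff p.1 (vSer h e μ) * (((p.2:ℕ):F) • PowerSeries.coeff p.2 (uSer h e (0:F))) := by
    intro p hp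
    have hp' : p.1 + p.2 = n + 1 := by simpa using hp
    rw [smul_mul_assoc, mul_smul_comm, ← add_smul]
    congr 1
    rw [← hp']
    push_cast
    ring
  rw [Finset.sum_congr rfl e1, Finset.sum_add_distrib]
  rw [Finset.Nat.sum_antidiagonal_succ (f := fun p =>
    (((p.1:ℕ):F) • PowerSeries.coeff p.1 (vSer h e μ)) * PowerSeries.coeff p.2 (uSer h e (0:F)))]
  rw [Finset.Nat.sum_antidiagonal_succ' (f := fun p =>
    PowerSeries.coeff p.1 (vSer h e μ) * (((p.2:ℕ):F) • PowerSeries.coeff p.2 (uSer h e (0:F))))]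
  simp only [Nat.cast_zero, zero_smul, zero_mul, mul_zero, smul_zero, zero_add, add_zero]
  have e2 : ∀ (p : ℕ×ℕ), ((((p.1+1:ℕ)):F) • PowerSeries.coeff (p.1+1) (vSer h e μ))
        * PowerSeries.coeff p.2 (uSer h e (0:F))
      = (PowerSeries.coeff p.1 (vSer h e μ) * (e * (h + algebraMap F A (μ+1))))
        * PowerSeries.coeff p.2 (uSer h e (0:F)) := by
    intro p; rw [vRec he p.1]
  have e3 : ∀ (p : ℕ×ℕ), PowerSeries.coeff p.1 (vSer h e μ)
        * ((((p.2+1:ℕ)):F) • PowerSeries.coeff (p.2+1) (uSer h e (0:F)))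
      = PowerSeries.coeff p.1 (vSer h e μ)
        * (-((e * (h + algebraMap F A 1)) * PowerSeries.coeff p.2 (uSer h e (0:F)))) := by
    intro p; rw [uRec he p.2]
  rw [Finset.sum_congr rfl (fun p _ => e2 p), Finset.sum_congr rfl (fun p _ => e3 p),
    ← Finset.sum_add_distrib, Sc, Finset.smul_sum]
  refine Finset.sum_congr rfl fun p _ => ?_
  have hsplit : e * (h + algebraMap F A (μ+1)) = e * (h + algebraMap F A 1) + μ • e := by
    rw [show algebraMap F A (μ+1) = algebraMap F A 1 + algebraMap F A μ by
      rw [← map_add]; congr 1; ring]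
    rw [show (algebraMap F A μ) = μ • (1:A) by rw [Algebra.algebraMap_eq_smul_one]]
    rw [← add_assoc, mul_add, mul_smul_comm, mul_one]
  rw [hsplit]
  simp only [mul_add, add_mul, mul_smul_comm, smul_mul_assoc, mul_assoc, mul_neg, neg_mul]
  abel

lemma B2 [CharZero F] {h e : A} {μ : F} (he : h*e = e*h + (1:F) • e) (n : ℕ) :
    Sc h e μ (n+1) = Pc h e μ (n+1) * e + Sc h e μ n * e := by
  have hU0 : PowerSeries.coeff 0 (uSer h e (0:F)) = 1 := by
    simp [uSer, PowerSeries.coeff_mk, descFac]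
  rw [Sc, Pc, Sc]
  rw [Finset.Nat.sum_antidiagonal_succ' (f := fun p =>
    PowerSeries.coeff p.1 (vSer h e μ) * (e * PowerSeries.coeff p.2 (uSer h e (0:F))))]
  rw [Finset.Nat.sum_antidiagonal_succ' (f := fun p =>
    PowerSeries.coeff p.1 (vSer h e μ) * PowerSeries.coeff p.2 (uSer h e (0:F)))]
  have e4 : ∀ (p : ℕ×ℕ), PowerSeries.coeff p.1 (vSer h e μ)
        * (e * PowerSeries.coeff (p.2+1) (uSer h e (0:F)))
      = (PowerSeries.coeff p.1 (vSer h e μ) * PowerSeries.coeff (p.2+1) (uSer h e (0:F))) * e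
        + (PowerSeries.coeff p.1 (vSer h e μ)
            * (e * PowerSeries.coeff p.2 (uSer h e (0:F)))) * e := by
    intro p
    rw [uComm he p.2, mul_add, ← mul_assoc, ← mul_assoc]
  rw [hU0, mul_one, Finset.sum_congr rfl (fun p _ => e4 p), Finset.sum_add_distrib,
    add_mul, Finset.sum_mul, Finset.sum_mul, mul_one]
  abel

lemma Brec [CharZero F] {h e : A} {μ : F} (he : h*e = e*h + (1:F) • e) (n : ℕ) :
    (((n+1:ℕ)):F) • Pc h e μ (n+1) = (μ + (n:F)) • (Pc h e μ n * e) := by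
  cases n with
  | zero =>
    rw [B3 he 0]
    have hS0 : Sc h e μ 0 = Pc h e μ 0 * e := by
      rw [Sc, Pc, Finset.Nat.antidiagonal_zero, Finset.sum_singleton, Finset.sum_singleton]
      have hU0 : PowerSeries.coeff 0 (uSer h e (0:F)) = 1 := by
        simp [uSer, PowerSeries.coeff_mk, descFac]
      have hV0 : PowerSeries.coeff 0 (vSer h e μ) = 1 := by
        simp [vSer, PowerSeries.coeff_mk, descFac]
      rw [hU0, hV0]
      simp
    rw [hS0, Nat.cast_zero, add_zero]
  | succ n =>
    rw [B3 he (n+1), B2 he n, smul_add]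
    rw [show μ • (Sc h e μ n * e) = (μ • Sc h e μ n) * e from (smul_mul_assoc μ _ e).symm]
    rw [← B3 he n, smul_mul_assoc, ← add_smul]

lemma lemB [CharZero F] {h e : A} {μ : F} (he : h*e = e*h + (1:F) • e) :
    vSer h e μ * uSer h e (0:F) = onePow (F := F) e (-μ) := by
  have hPn : ∀ n, Pc h e μ n = betaF μ n • e ^ n := by
    intro n
    induction n with
    | zero =>
      rw [Pc, Finset.Nat.antidiagonal_zero, Finset.sum_singleton]
      have hU0 : PowerSeries.coeff 0 (uSer h e (0:F)) = 1 := by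
        simp [uSer, PowerSeries.coeff_mk, descFac]
      have hV0 : PowerSeries.coeff 0 (vSer h e μ) = 1 := by
        simp [vSer, PowerSeries.coeff_mk, descFac]
      rw [hU0, hV0, betaF_zero, mul_one, pow_zero, one_smul]
    | succ n ih =>
      have hr := Brec (μ := μ) he n
      rw [ih, smul_mul_assoc, smul_smul, ← pow_succ] at hr
      have hne : (((n+1:ℕ)):F) ≠ 0 := Nat.cast_ne_zero.2 (Nat.succ_ne_zero n)
      have := congrArg (fun z => (((n+1:ℕ)):F)⁻¹ • z) hr
      simp only [inv_smul_smul₀ hne, smul_smul] at this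
      rw [this, betaF_succ]
      push_cast
      ring_nf
  ext n
  rw [PowerSeries.coeff_mul]
  have : (∑ p ∈ antidiagonal n, PowerSeries.coeff p.1 (vSer h e μ)
      * PowerSeries.coeff p.2 (uSer h e (0:F))) = Pc h e μ n := rfl
  rw [this, hPn n]
  simp only [onePow, PowerSeries.coeff_mk, beta_eq]

end SerB2

noncomputable section SerC
variable {F : Type*} [Field F] {A : Type*} [Ring A] [Algebra F A]
open Finset PowerSeries

lemma pow_mul_asc {h e : A} (he : h*e = e*h + (1:F) • e) (k ℓ : ℕ) (a : F) :
    e^k * ascFac h a ℓ = ascFac h (a - ((k:ℕ):F)) ℓ * e^k := by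
  have h0 := ascFac_mul_comm (z := e^k) (ν := ((k:ℕ):F)) (h_mul_pow_s16 he k) (a - ((k:ℕ):F)) ℓ
  rw [sub_add_cancel] at h0
  exact h0.symm

lemma lemC_L [CharZero F] (h e Y : A) (μ : F) (m k : ℕ) :
    ((((m.factorial:F))⁻¹ • ((fun w => e*w - w*e)^[m] Y)) * ascFac h (μ+1) m)
        * (betaF μ k • e^k)
      = ∑ p ∈ range (m+1),
          (((m.factorial:F))⁻¹ * ((m.choose p : F) * ∏ q ∈ range p, ((μ + ((k:ℕ):F)) + (q:ℕ)))
              * betaF μ k)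
            • (((fun w => e*w - w*e)^[m] Y) * (ascFac h (1 - ((k:ℕ):F)) (m - p) * e^k)) := by
  rw [show (μ + 1 : F) = (1 - ((k:ℕ):F)) + (μ + ((k:ℕ):F)) by ring,
    asc_vandermonde h (1 - ((k:ℕ):F)) (μ + ((k:ℕ):F)) m, Finset.mul_sum, Finset.sum_mul]
  refine Finset.sum_congr rfl fun p _ => ?_
  simp only [smul_mul_assoc, mul_smul_comm, smul_smul, mul_assoc]
  congr 1
  ring

lemma lemC_R [CharZero F] {h e : A} (Y : A) {μ : F} (he : h*e = e*h + (1:F) • e) (ℓ i : ℕ) :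
    (betaF μ i • e^i) * ((((ℓ.factorial:F))⁻¹ • ((fun w => e*w - w*e)^[ℓ] Y)) * ascFac h (1:F) ℓ)
      = ∑ p ∈ range (i+1),
          (betaF μ i * ((i.choose p : F) * ((ℓ.factorial:F))⁻¹))
            • (((fun w => e*w - w*e)^[p+ℓ] Y)
                * (ascFac h (1 - (((i-p):ℕ):F)) ℓ * e^(i-p))) := by
  have h1 : e^i * (((fun w => e*w - w*e)^[ℓ] Y) * ascFac h (1:F) ℓ)
      = ∑ p ∈ range (i+1), ((i.choose p : F))
          • (((fun w => e*w - w*e)^[p+ℓ] Y)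
              * (ascFac h (1 - (((i-p):ℕ):F)) ℓ * e^(i-p))) := by
    rw [← mul_assoc, pow_mul_expand (F:=F) e ((fun w => e*w - w*e)^[ℓ] Y) i, Finset.sum_mul]
    refine Finset.sum_congr rfl fun p _ => ?_
    rw [smul_mul_assoc, mul_assoc, pow_mul_asc he (i-p) ℓ (1:F),
      ← Function.iterate_add_apply]
  rw [smul_mul_assoc, smul_mul_assoc, mul_smul_comm, smul_smul, h1, Finset.smul_sum]
  refine Finset.sum_congr rfl fun p _ => ?_
  rw [smul_smul]
  congr 1
  ring

lemma lemC [CharZero F] {h e : A} (Y : A) {μ : F} (he : h*e = e*h + (1:F) • e) :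
    PowerSeries.mk (fun m => (((m.factorial : F))⁻¹ • ((fun w => e*w - w*e)^[m] Y))
          * ascFac h (μ+1) m) * onePow (F := F) e (-μ)
      = onePow (F := F) e (-μ)
        * PowerSeries.mk (fun ℓ => (((ℓ.factorial : F))⁻¹ • ((fun w => e*w - w*e)^[ℓ] Y))
            * ascFac h (1:F) ℓ) := by
  have honep : ∀ r, PowerSeries.coeff r (onePow (F := F) e (-μ)) = betaF μ r • e^r := by
    intro r; simp only [onePow, PowerSeries.coeff_mk, beta_eq]
  ext n
  rw [PowerSeries.coeff_mul, PowerSeries.coeff_mul,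
    Finset.Nat.sum_antidiagonal_eq_sum_range_succ_mk,
    Finset.Nat.sum_antidiagonal_eq_sum_range_succ_mk]
  simp only [PowerSeries.coeff_mk, honep]
  rw [Finset.sum_congr rfl (fun m _ => lemC_L h e Y μ m (n-m)),
    Finset.sum_congr rfl (fun i _ => lemC_R Y he (n-i) i),
    Finset.sum_sigma', Finset.sum_sigma']
  refine Finset.sum_nbij' (fun x => ⟨n - x.1 + x.2, x.2⟩) (fun x => ⟨n - x.1 + x.2, x.2⟩)
    ?_ ?_ ?_ ?_ ?_
  · rintro ⟨m, p⟩ hx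
    simp only [Finset.mem_sigma, Finset.mem_range] at hx ⊢
    omega
  · rintro ⟨m, p⟩ hx
    simp only [Finset.mem_sigma, Finset.mem_range] at hx ⊢
    omega
  · rintro ⟨m, p⟩ hx
    simp only [Finset.mem_sigma, Finset.mem_range] at hx
    have h1 : n - (n - m + p) + p = m := by omega
    simp [h1]
  · rintro ⟨m, p⟩ hx
    simp only [Finset.mem_sigma, Finset.mem_range] at hx
    have h1 : n - (n - m + p) + p = m := by omega
    simp [h1]
  · rintro ⟨m, p⟩ hx
    simp only [Finset.mem_sigma, Finset.mem_range] at hx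
    obtain ⟨hm, hp⟩ := hx
    have hm' : m ≤ n := by omega
    have hp' : p ≤ m := by omega
    have E1 : n - (n - m + p) = m - p := by omega
    have E3 : n - m + p - p = n - m := by omega
    simp only []
    rw [E1, E3, show p + (m - p) = m by omega]
    congr 1
    -- scalar identity
    have hs4 := betaF_s4 μ (n - m) p
    have hfac : (m.factorial : F)
        = (m.choose p : F) * (p.factorial : F) * ((m-p).factorial : F) := by
      exact_mod_cast congrArg (Nat.cast (R := F)) (Nat.choose_mul_factorial_mul_factorial hp').symm
    have h2 : ((m.factorial:F)) ≠ 0 := Nat.cast_ne_zero.2 (Nat.factorial_ne_zero _)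
    have h3 : (((m-p).factorial:F)) ≠ 0 := Nat.cast_ne_zero.2 (Nat.factorial_ne_zero _)
    field_simp
    linear_combination (-1 * (m.choose p : F) * ((m-p).factorial : F)) * hs4
      + (-1 * betaF μ (n-m+p) * ((n-m+p).choose p : F)) * hfac

end SerC

/-- **Lemma 2.8 (ii)**: if `h·e − e·h = e` and `h·y − y·h = c·y` then, with `u = u_0` and
`v = v_0`, `v · y^s · u = (1−et)^{−sc} · (∑_{ℓ≥0} d^(ℓ)(y^s) h_1^⟨ℓ⟩ t^ℓ)` in `A[[t]]`. -/
theorem vSer_mul_pow_mul_uSer {F : Type*} [Field F] [CharZero F]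
    {A : Type*} [Ring A] [Algebra F A] (h e y : A) (c : F)
    (he : h * e - e * h = e) (hy : h * y - y * h = c • y) (s : ℕ) (hs : 1 ≤ s) :
    vSer h e (0 : F) * PowerSeries.C (y ^ s) * uSer h e (0 : F) =
      onePow (F := F) e (-(s * c)) *
        PowerSeries.mk (fun ℓ => dpow F e ℓ (y ^ s) * ascFac h (1 : F) ℓ) := by
  have he' : h * e = e * h + (1:F) • e := by
    rw [one_smul]
    have h0 := sub_eq_iff_eq_add.mp he
    rw [h0]
    abel
  have hy' : h * y = y * h + c • y := by
    have h0 := sub_eq_iff_eq_add.mp hy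
    rw [h0]
    abel
  have hYs : ∀ t : ℕ, h * y^t = y^t * h + ((t:F) * c) • y^t := by
    intro t
    induction t with
    | zero => simp
    | succ t ih =>
      rw [pow_succ']
      calc h * (y * y^t) = (h * y) * y^t := by rw [mul_assoc]
        _ = y * (h * y^t) + c • (y * y^t) := by
            rw [hy', add_mul, smul_mul_assoc, mul_assoc]
        _ = y * (y^t*h + ((t:F)*c)•y^t) + c • (y*y^t) := by rw [ih]
        _ = (y*y^t)*h + (((t+1:ℕ):F)*c) • (y*y^t) := by
            rw [mul_add, ← mul_assoc, mul_smul_comm]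
            push_cast
            rw [add_mul, one_mul, add_smul]
            abel
  rw [lemA he' (hYs s), mul_assoc, lemB he', lemC (y^s) he']
  rfl
end

section
/- For all integers a and k and every natural number ℓ, the factorial ℓ! divides the integer a^ℓ · ∏_{j=0}^{ℓ−1} (k + j·a); equivalently, a^ℓ · ∏_{j=0}^{ℓ−1} (k + j·a) / ℓ! is an integer. (Lemma 2.9.) -/
/-!
It suffices to show that every prime power `p ^ e` dividing `ℓ!` divides the product.
If `p ∣ a`, then `e ≤ v_p(ℓ!) ≤ ℓ / (p - 1) ≤ ℓ`, so `p ^ e ∣ a ^ ℓ`. Otherwise `a` has an inverse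
`u` modulo `p ^ e`, and `∏ (k + j a) ≡ a ^ ℓ ∏ (u k + j)`, where the last product is a product of
`ℓ` consecutive integers and hence divisible by `ℓ!`.
-/

open Finset Nat

lemma ascPochhammer_eval_eq_prod_range {R : Type*} [CommSemiring R] (n : ℕ) (r : R) :
    (ascPochhammer R n).eval r = ∏ j ∈ range n, (r + j) := by
  induction n with
  | zero => simp
  | succ n ih => simp [ascPochhammer_succ_right, ih, ← prod_range_succ]

theorem Int.factorial_dvd_prod_range_add (m : ℤ) (ℓ : ℕ) :
    (ℓ ! : ℤ) ∣ ∏ j ∈ Finset.range ℓ, (m + j) := by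
  refine ⟨Ring.multichoose m ℓ, ?_⟩
  rw [← ascPochhammer_eval_eq_prod_range, ← Polynomial.ascPochhammer_smeval_eq_eval,
    ← Ring.factorial_nsmul_multichoose_eq_ascPochhammer, nsmul_eq_mul]

theorem Nat.Prime.le_of_pow_dvd_factorial {p e ℓ : ℕ} (hp : p.Prime) (h : p ^ e ∣ ℓ !) : e ≤ ℓ :=
  calc e ≤ (ℓ)!.factorization p := (hp.pow_dvd_iff_le_factorization (factorial_ne_zero ℓ)).mp h
    _ ≤ ℓ / (p - 1) := factorization_factorial_le_div_pred hp ℓ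
    _ ≤ ℓ := Nat.div_le_self ℓ (p - 1)

theorem Int.dvd_prod_range_add_mul_of_isCoprime {n a : ℤ} (k : ℤ) {ℓ : ℕ} (hna : IsCoprime n a)
    (hn : n ∣ ℓ !) : n ∣ ∏ j ∈ Finset.range ℓ, (k + j * a) := by
  obtain ⟨u, v, huv⟩ := hna.symm
  have hua : u * a ≡ 1 [ZMOD n] := Int.modEq_iff_dvd.mpr ⟨v, by linear_combination -huv⟩
  have hfactor : ∀ j ∈ Finset.range ℓ, k + j * a ≡ a * (u * k + j) [ZMOD n] := fun j _ =>
    calc k + j * a = 1 * k + j * a := by ring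
      _ ≡ u * a * k + j * a [ZMOD n] := (hua.symm.mul_right k).add_right _
      _ = a * (u * k + j) := by ring
  have hprod := Int.ModEq.prod hfactor
  rw [prod_mul_distrib, prod_const, card_range] at hprod
  exact (Int.ModEq.dvd_iff hprod).mpr ((hn.trans (factorial_dvd_prod_range_add _ ℓ)).mul_left _)

/-- **Lemma 2.9**: for all integers `a`, `k` and every natural number `ℓ`, the factorial `ℓ!`
divides `a^ℓ · ∏_{j=0}^{ℓ−1} (k + j·a)`; i.e. `a^ℓ ∏_{j<ℓ} (k + ja) / ℓ!` is an integer. -/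
theorem factorial_dvd_pow_mul_prod (a k : ℤ) (ℓ : ℕ) :
    (ℓ.factorial : ℤ) ∣ a ^ ℓ * ∏ j ∈ Finset.range ℓ, (k + j * a) := by
  rw [Int.natCast_dvd, Nat.dvd_iff_prime_pow_dvd_dvd]
  intro p e hp hpe
  rw [← Int.natCast_dvd, Nat.cast_pow]
  by_cases hpa : (p : ℤ) ∣ a
  · have hpℓ : (p : ℤ) ^ e ∣ (p : ℤ) ^ ℓ := pow_dvd_pow _ (hp.le_of_pow_dvd_factorial hpe)
    exact (hpℓ.trans (pow_dvd_pow_of_dvd hpa ℓ)).mul_right _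
  · have hcop : IsCoprime ((p : ℤ) ^ e) a :=
      ((Nat.prime_iff_prime_int.mp hp).coprime_iff_not_dvd.mpr hpa).pow_left
    exact (Int.dvd_prod_range_add_mul_of_isCoprime k hcop (mod_cast hpe)).mul_left _
end
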